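/- arXiv:1709.05714 — 5 statements merged into one kernel-verified Lean document; each statement's English description precedes it below -/
import Mathlib

section
/- Let a₁, a₂, a₃ ∈ ℂ satisfy the system 4(a₁a₂ + a₁a₃ − a₂a₃) + 8a₁² = a₁, 4(a₁a₂ + a₂a₃ − a₁a₃) + 8a₂² = a₂, 4(a₁a₃ + a₂a₃ − a₁a₂) + 8a₃² = a₃, and suppose it is not the case that a₁ = a₂ = a₃. Then a₁ + a₂ + a₃ = 1/8 and a₁a₂ + a₁a₃ + a₂a₃ = 0. -/
theorem stmt_0 (a₁ a₂ a₃ : ℂ)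
    (h1 : 4 * (a₁ * a₂ + a₁ * a₃ - a₂ * a₃) + 8 * a₁ ^ 2 = a₁)
    (h2 : 4 * (a₁ * a₂ + a₂ * a₃ - a₁ * a₃) + 8 * a₂ ^ 2 = a₂)
    (h3 : 4 * (a₁ * a₃ + a₂ * a₃ - a₁ * a₂) + 8 * a₃ ^ 2 = a₃)
    (hne : ¬ (a₁ = a₂ ∧ a₂ = a₃)) :
    a₁ + a₂ + a₃ = 1 / 8 ∧ a₁ * a₂ + a₁ * a₃ + a₂ * a₃ = 0 := by
  have key1 : (a₁ - a₂) * (8 * (a₁ + a₂ + a₃) - 1) = 0 := by linear_combination h1 - h2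
  have key2 : (a₂ - a₃) * (8 * (a₁ + a₂ + a₃) - 1) = 0 := by linear_combination h2 - h3
  have hs : a₁ + a₂ + a₃ = 1 / 8 := by
    rcases mul_eq_zero.1 key1 with h | h
    · rcases mul_eq_zero.1 key2 with h' | h'
      · exact absurd ⟨sub_eq_zero.1 h, sub_eq_zero.1 h'⟩ hne
      · linear_combination h' / 8
    · have := h; linear_combination this / 8
  refine ⟨hs, ?_⟩
  linear_combination (-1/12) * (h1 + h2 + h3) + (2/3) * (a₁ + a₂ + a₃) * hs
end

section
/- Let ℓ ∈ ℂ with ℓ ≠ 0, −2, 4. Then the set of solutions (a₁,a₂,a₃) ∈ ℂ³ of the system 4(a₁a₂+a₁a₃−a₂a₃)+2ℓa₁² = a₁, 4(a₁a₂+a₂a₃−a₁a₃)+2ℓa₂² = a₂, 4(a₁a₃+a₂a₃−a₁a₂)+2ℓa₃² = a₃ consists of exactly 8 elements: (0,0,0), (1/(2(ℓ+2)), 1/(2(ℓ+2)), 1/(2(ℓ+2))), the three permutations of (1/(2ℓ), 0, 0), and the three permutations of (−1/(ℓ(ℓ+2)), 1/(2(ℓ+2)), 1/(2(ℓ+2))).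 -/
set_option maxHeartbeats 1000000

theorem stmt_2 (ℓ : ℂ) (h0 : ℓ ≠ 0) (h2 : ℓ ≠ -2) (h4 : ℓ ≠ 4) :
    {p : ℂ × ℂ × ℂ |
        4 * (p.1 * p.2.1 + p.1 * p.2.2 - p.2.1 * p.2.2) + 2 * ℓ * p.1 ^ 2 = p.1 ∧
        4 * (p.1 * p.2.1 + p.2.1 * p.2.2 - p.1 * p.2.2) + 2 * ℓ * p.2.1 ^ 2 = p.2.1 ∧
        4 * (p.1 * p.2.2 + p.2.1 * p.2.2 - p.1 * p.2.1) + 2 * ℓ * p.2.2 ^ 2 = p.2.2} =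
      ({((0 : ℂ), (0 : ℂ), (0 : ℂ)),
        (1 / (2 * (ℓ + 2)), 1 / (2 * (ℓ + 2)), 1 / (2 * (ℓ + 2))),
        (1 / (2 * ℓ), 0, 0), (0, 1 / (2 * ℓ), 0), (0, 0, 1 / (2 * ℓ)),
        (-1 / (ℓ * (ℓ + 2)), 1 / (2 * (ℓ + 2)), 1 / (2 * (ℓ + 2))),
        (1 / (2 * (ℓ + 2)), -1 / (ℓ * (ℓ + 2)), 1 / (2 * (ℓ + 2))),
        (1 / (2 * (ℓ + 2)), 1 / (2 * (ℓ + 2)), -1 / (ℓ * (ℓ + 2)))} :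
          Set (ℂ × ℂ × ℂ)) ∧
    ({p : ℂ × ℂ × ℂ |
        4 * (p.1 * p.2.1 + p.1 * p.2.2 - p.2.1 * p.2.2) + 2 * ℓ * p.1 ^ 2 = p.1 ∧
        4 * (p.1 * p.2.1 + p.2.1 * p.2.2 - p.1 * p.2.2) + 2 * ℓ * p.2.1 ^ 2 = p.2.1 ∧
        4 * (p.1 * p.2.2 + p.2.1 * p.2.2 - p.1 * p.2.1) + 2 * ℓ * p.2.2 ^ 2 = p.2.2}).ncard
      = 8 := by
  have hL2 : ℓ + 2 ≠ 0 := fun h => h2 (by linear_combination h)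
  have hL4 : 8 - 2 * ℓ ≠ 0 := fun h => h4 (by linear_combination -h/2)
  have h2L2 : (2 : ℂ) * (ℓ + 2) ≠ 0 := by
    intro h; exact hL2 (by linear_combination h / 2)
  have h2L : (2 : ℂ) * ℓ ≠ 0 := by
    intro h; exact h0 (by linear_combination h / 2)
  have hLL2 : ℓ * (ℓ + 2) ≠ 0 := mul_ne_zero h0 hL2
  have hset :
      {p : ℂ × ℂ × ℂ |
        4 * (p.1 * p.2.1 + p.1 * p.2.2 - p.2.1 * p.2.2) + 2 * ℓ * p.1 ^ 2 = p.1 ∧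
        4 * (p.1 * p.2.1 + p.2.1 * p.2.2 - p.1 * p.2.2) + 2 * ℓ * p.2.1 ^ 2 = p.2.1 ∧
        4 * (p.1 * p.2.2 + p.2.1 * p.2.2 - p.1 * p.2.1) + 2 * ℓ * p.2.2 ^ 2 = p.2.2} =
      ({((0 : ℂ), (0 : ℂ), (0 : ℂ)),
        (1 / (2 * (ℓ + 2)), 1 / (2 * (ℓ + 2)), 1 / (2 * (ℓ + 2))),
        (1 / (2 * ℓ), 0, 0), (0, 1 / (2 * ℓ), 0), (0, 0, 1 / (2 * ℓ)),
        (-1 / (ℓ * (ℓ + 2)), 1 / (2 * (ℓ + 2)), 1 / (2 * (ℓ + 2))),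
        (1 / (2 * (ℓ + 2)), -1 / (ℓ * (ℓ + 2)), 1 / (2 * (ℓ + 2))),
        (1 / (2 * (ℓ + 2)), 1 / (2 * (ℓ + 2)), -1 / (ℓ * (ℓ + 2)))} :
          Set (ℂ × ℂ × ℂ)) := by
    ext ⟨a, b, c⟩
    simp only [Set.mem_setOf_eq, Set.mem_insert_iff, Set.mem_singleton_iff, Prod.mk.injEq]
    constructor
    · rintro ⟨e1, e2, e3⟩
      have key : ∀ x : ℂ, x * ((2 * ℓ + 4) * x - 1) = 0 →
          8 * x + 2 * ℓ * (x + x) - 1 = 0 → False := by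
        intro x hq hb
        rcases mul_eq_zero.mp hq with hx | hx
        · exact absurd (show (1 : ℂ) = 0 by
            linear_combination -hb + (8 + 4 * ℓ) * hx) one_ne_zero
        · exact absurd (show (1 : ℂ) = 0 by
            linear_combination hb - 2 * hx) one_ne_zero
      have h12 : (a - b) * (8 * c + 2 * ℓ * (a + b) - 1) = 0 := by linear_combination e1 - e2
      have h13 : (a - c) * (8 * b + 2 * ℓ * (a + c) - 1) = 0 := by linear_combination e1 - e3
      have h23 : (b - c) * (8 * a + 2 * ℓ * (b + c) - 1) = 0 := by linear_combination e2 - e3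
      rcases mul_eq_zero.mp h12 with f1 | f1 <;>
        rcases mul_eq_zero.mp h13 with f2 | f2 <;>
          rcases mul_eq_zero.mp h23 with f3 | f3
      -- leaf 1 : a=b, a=c, b=c
      · have hq : a * ((2 * ℓ + 4) * a - 1) = 0 := by
          linear_combination e1 + 4 * (a - c) * f1
        rcases mul_eq_zero.mp hq with hx | hx
        · exact Or.inl ⟨hx, by linear_combination hx - f1, by linear_combination hx - f2⟩
        · have ha : a = 1 / (2 * (ℓ + 2)) := by field_simp; linear_combination hx
          exact Or.inr (Or.inl ⟨ha, by rw [← ha]; linear_combination -f1,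
            by rw [← ha]; linear_combination -f2⟩)
      -- leaf 2 : a=b, a=c, bracket a
      · have hq : a * ((2 * ℓ + 4) * a - 1) = 0 := by
          linear_combination e1 + 4 * (a - c) * f1
        have br : 8 * a + 2 * ℓ * (a + a) - 1 = 0 := by
          linear_combination f3 + 2 * ℓ * f1 + 2 * ℓ * f2
        exact (key a hq br).elim
      -- leaf 3 : a=b, bracket b, b=c
      · have hq : a * ((2 * ℓ + 4) * a - 1) = 0 := by
          linear_combination e1 + 4 * (a - c) * f1
        have hac : a - c = 0 := by linear_combination f1 + f3
        have br : 8 * a + 2 * ℓ * (a + a) - 1 = 0 := by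
          linear_combination f2 + 8 * f1 + 2 * ℓ * hac
        exact (key a hq br).elim
      -- leaf 4 : a=b, bracket b, bracket a
      · have hq : a * ((2 * ℓ + 4) * a - 1) = 0 := by
          linear_combination e1 + 4 * (a - c) * f1
        have br : 8 * a + 2 * ℓ * (a + c) - 1 = 0 := by
          linear_combination f3 + 2 * ℓ * f1
        rcases mul_eq_zero.mp hq with hx | hx
        · have hc : c = 1 / (2 * ℓ) := by
            field_simp
            linear_combination br - (8 + 2 * ℓ) * hx
          exact Or.inr (Or.inr (Or.inr (Or.inr (Or.inl
            ⟨hx, by linear_combination hx - f1, hc⟩))))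
        · have ha : a = 1 / (2 * (ℓ + 2)) := by field_simp; linear_combination hx
          have hc : c = -1 / (ℓ * (ℓ + 2)) := by
            field_simp
            linear_combination ((ℓ + 2) / 2) * br - ((ℓ + 4) / 2) * hx
          exact Or.inr (Or.inr (Or.inr (Or.inr (Or.inr (Or.inr (Or.inr
            ⟨ha, by rw [← ha]; linear_combination -f1, hc⟩))))))
      -- leaf 5 : bracket c, a=c, b=c
      · have hq : a * ((2 * ℓ + 4) * a - 1) = 0 := by
          linear_combination e1 + 4 * (a - b) * f2
        have hab : a - b = 0 := by linear_combination f2 - f3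
        have br : 8 * a + 2 * ℓ * (a + a) - 1 = 0 := by
          linear_combination f1 + 8 * f2 + 2 * ℓ * hab
        exact (key a hq br).elim
      -- leaf 6 : bracket c, a=c, bracket a
      · have hq : a * ((2 * ℓ + 4) * a - 1) = 0 := by
          linear_combination e1 + 4 * (a - b) * f2
        have br : 8 * a + 2 * ℓ * (a + b) - 1 = 0 := by
          linear_combination f1 + 8 * f2
        rcases mul_eq_zero.mp hq with hx | hx
        · have hb : b = 1 / (2 * ℓ) := by
            field_simp
            linear_combination br - (8 + 2 * ℓ) * hx
          exact Or.inr (Or.inr (Or.inr (Or.inl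
            ⟨hx, hb, by linear_combination hx - f2⟩)))
        · have ha : a = 1 / (2 * (ℓ + 2)) := by field_simp; linear_combination hx
          have hb : b = -1 / (ℓ * (ℓ + 2)) := by
            field_simp
            linear_combination ((ℓ + 2) / 2) * br - ((ℓ + 4) / 2) * hx
          exact Or.inr (Or.inr (Or.inr (Or.inr (Or.inr (Or.inr (Or.inl
            ⟨ha, hb, by rw [← ha]; linear_combination -f2⟩))))))
      -- leaf 7 : bracket c, bracket b, b=c
      · have hq : b * ((2 * ℓ + 4) * b - 1) = 0 := by
          linear_combination e2 + 4 * (b - a) * f3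
        have br : 8 * b + 2 * ℓ * (a + b) - 1 = 0 := by
          linear_combination f1 + 8 * f3
        rcases mul_eq_zero.mp hq with hx | hx
        · have ha : a = 1 / (2 * ℓ) := by
            field_simp
            linear_combination br - (8 + 2 * ℓ) * hx
          exact Or.inr (Or.inr (Or.inl ⟨ha, hx, by linear_combination hx - f3⟩))
        · have hb : b = 1 / (2 * (ℓ + 2)) := by field_simp; linear_combination hx
          have ha : a = -1 / (ℓ * (ℓ + 2)) := by
            field_simp
            linear_combination ((ℓ + 2) / 2) * br - ((ℓ + 4) / 2) * hx
          exact Or.inr (Or.inr (Or.inr (Or.inr (Or.inr (Or.inl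
            ⟨ha, hb, by rw [← hb]; linear_combination -f3⟩)))))
      -- leaf 8 : all brackets
      · have hcb : c - b = 0 := by
          have h := mul_eq_zero.mp (show (c - b) * (8 - 2 * ℓ) = 0 by
            linear_combination f1 - f2)
          exact h.resolve_right hL4
        have hba : b - a = 0 := by
          have h := mul_eq_zero.mp (show (b - a) * (8 - 2 * ℓ) = 0 by
            linear_combination f2 - f3)
          exact h.resolve_right hL4
        have hab : a - b = 0 := by linear_combination -hba
        have hac : a - c = 0 := by linear_combination -hba - hcb
        have hq : a * ((2 * ℓ + 4) * a - 1) = 0 := by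
          linear_combination e1 + 4 * (a - c) * hab
        have br : 8 * a + 2 * ℓ * (a + a) - 1 = 0 := by
          linear_combination f3 + 2 * ℓ * hab + 2 * ℓ * hac
        exact (key a hq br).elim
    · rintro (⟨rfl, rfl, rfl⟩ | ⟨rfl, rfl, rfl⟩ | ⟨rfl, rfl, rfl⟩ | ⟨rfl, rfl, rfl⟩ |
        ⟨rfl, rfl, rfl⟩ | ⟨rfl, rfl, rfl⟩ | ⟨rfl, rfl, rfl⟩ | ⟨rfl, rfl, rfl⟩) <;>
        refine ⟨?_, ?_, ?_⟩ <;> clear h2 h4 hL4 <;>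
        first
          | (field_simp; ring1)
          | (field_simp; rw [div_eq_iff (by norm_num [mul_eq_zero, h0, hL2])]; ring1)
          | field_simp
          | norm_num
  refine ⟨hset, ?_⟩
  rw [hset]
  have hu0 : (1 : ℂ) / (2 * (ℓ + 2)) ≠ 0 := div_ne_zero one_ne_zero h2L2
  have hv0 : (1 : ℂ) / (2 * ℓ) ≠ 0 := div_ne_zero one_ne_zero h2L
  have hw0 : (-1 : ℂ) / (ℓ * (ℓ + 2)) ≠ 0 := div_ne_zero (by norm_num) hLL2
  have huv : (1 : ℂ) / (2 * (ℓ + 2)) ≠ 1 / (2 * ℓ) := by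
    intro h
    rw [div_eq_div_iff h2L2 h2L] at h
    have h40 : (4 : ℂ) = 0 := by linear_combination -h
    norm_num at h40
  have huw : (1 : ℂ) / (2 * (ℓ + 2)) ≠ -1 / (ℓ * (ℓ + 2)) := by
    intro h
    rw [div_eq_div_iff h2L2 hLL2] at h
    have hsq : (ℓ + 2) ^ 2 = 0 := by linear_combination h
    exact hL2 (sq_eq_zero_iff.mp hsq)
  have hu0' := hu0.symm
  have hv0' := hv0.symm
  have hw0' := hw0.symm
  have huv' := huv.symm
  have huw' := huw.symm
  rw [Set.ncard_insert_of_notMem (by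
        simp only [Set.mem_insert_iff, Set.mem_singleton_iff, Prod.mk.injEq]; tauto),
      Set.ncard_insert_of_notMem (by
        simp only [Set.mem_insert_iff, Set.mem_singleton_iff, Prod.mk.injEq]; tauto),
      Set.ncard_insert_of_notMem (by
        simp only [Set.mem_insert_iff, Set.mem_singleton_iff, Prod.mk.injEq]; tauto),
      Set.ncard_insert_of_notMem (by
        simp only [Set.mem_insert_iff, Set.mem_singleton_iff, Prod.mk.injEq]; tauto),
      Set.ncard_insert_of_notMem (by
        simp only [Set.mem_insert_iff, Set.mem_singleton_iff, Prod.mk.injEq]; tauto),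
      Set.ncard_insert_of_notMem (by
        simp only [Set.mem_insert_iff, Set.mem_singleton_iff, Prod.mk.injEq]; tauto),
      Set.ncard_insert_of_notMem (by
        simp only [Set.mem_insert_iff, Set.mem_singleton_iff, Prod.mk.injEq]; tauto),
      Set.ncard_singleton]
end

section
/- Let ℓ ∈ ℂ with ℓ ≠ 0, −2, and let A = diag(1/(2ℓ), 0, 0) and B = diag(−1/(ℓ(ℓ+2)), 1/(2(ℓ+2)), 1/(2(ℓ+2))). Then the system of seven equations (4.5) of the paper fails for the pair (A, B): i.e., it is not the case that 2(a₁b₂+a₂b₁+a₁b₃+a₃b₁−a₂b₃−a₃b₂)+2ℓa₁b₁ = a₁ together with the remaining six equations, where aᵢ are the diagonal entries of A and bᵢ those of B. -/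
theorem stmt_9 (ℓ : ℂ) (h0 : ℓ ≠ 0) (h2 : ℓ ≠ -2)
    (a₁ a₂ a₃ b₁ b₂ b₃ : ℂ)
    (ha : a₁ = 1 / (2 * ℓ) ∧ a₂ = 0 ∧ a₃ = 0)
    (hb : b₁ = -1 / (ℓ * (ℓ + 2)) ∧ b₂ = 1 / (2 * (ℓ + 2)) ∧ b₃ = 1 / (2 * (ℓ + 2))) :
    ¬ (2 * (a₁ * b₂ + a₂ * b₁ + a₁ * b₃ + a₃ * b₁ - a₂ * b₃ - a₃ * b₂) + 2 * ℓ * a₁ * b₁ = a₁ ∧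
       2 * (a₁ * b₂ + a₂ * b₁ + a₂ * b₃ + a₃ * b₂ - a₁ * b₃ - a₃ * b₁) + 2 * ℓ * a₂ * b₂ = a₂ ∧
       2 * (a₁ * b₃ + a₃ * b₁ + a₂ * b₃ + a₃ * b₂ - a₁ * b₂ - a₂ * b₁) + 2 * ℓ * a₃ * b₃ = a₃ ∧
       2 * ℓ * a₁ * b₁ + 4 * b₁ * a₂ + 4 * b₃ * a₁ - 4 * b₃ * a₂
         = 2 * ℓ * a₁ ^ 2 + 4 * a₁ * a₂ + 4 * a₁ * a₃ - 4 * a₂ * a₃ ∧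
       2 * ℓ * a₂ * b₂ + 4 * b₂ * a₁ - 4 * b₃ * a₁ + 4 * b₃ * a₂
         = 2 * ℓ * a₂ ^ 2 + 4 * a₁ * a₂ + 4 * a₂ * a₃ - 4 * a₁ * a₃ ∧
       2 * ℓ * a₃ * b₃ + 4 * b₃ * a₁ + 4 * b₂ * a₃ - 4 * b₂ * a₁
         = 2 * ℓ * a₃ ^ 2 + 4 * a₁ * a₃ + 4 * a₂ * a₃ - 4 * a₁ * a₂ ∧
       b₁ * a₂ - b₂ * a₁ + b₃ * a₁ - b₁ * a₃ + b₂ * a₃ - b₃ * a₂ = 0) := by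
  obtain ⟨ha1, ha2, ha3⟩ := ha
  obtain ⟨hb1, hb2, hb3⟩ := hb
  rintro ⟨h, -⟩
  have hℓ2 : ℓ + 2 ≠ 0 := fun h => h2 (by linear_combination h)
  rw [ha1, ha2, ha3, hb1, hb2, hb3] at h
  field_simp at h
  have hne : ℓ * (ℓ + 2) ≠ 0 := mul_ne_zero h0 hℓ2
  have hsq : (ℓ * (ℓ + 2)) ^ 2 = 0 := by linear_combination (-ℓ ^ 2 * (ℓ + 2)) * h
  exact hne (pow_eq_zero_iff (by norm_num)|>.mp hsq)
end

section
/- Let ℓ ∈ ℂ, ℓ ≠ 0, −2, and let A be a diagonal 3×3 complex matrix satisfying the level-ℓ equations (4.4). If α ∈ ℂ and αA also satisfies equations (4.4), then α = 0 or α = 1. -/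
theorem stmt_12 (ℓ : ℂ) (h0 : ℓ ≠ 0) (h2 : ℓ ≠ -2) (a₁ a₂ a₃ α : ℂ)
    (hA0 : ¬ (a₁ = 0 ∧ a₂ = 0 ∧ a₃ = 0))
    (e1 : 4 * (a₁ * a₂ + a₁ * a₃ - a₂ * a₃) + 2 * ℓ * a₁ ^ 2 = a₁)
    (e2 : 4 * (a₁ * a₂ + a₂ * a₃ - a₁ * a₃) + 2 * ℓ * a₂ ^ 2 = a₂)
    (e3 : 4 * (a₁ * a₃ + a₂ * a₃ - a₁ * a₂) + 2 * ℓ * a₃ ^ 2 = a₃)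
    (f1 : 4 * ((α * a₁) * (α * a₂) + (α * a₁) * (α * a₃) - (α * a₂) * (α * a₃))
        + 2 * ℓ * (α * a₁) ^ 2 = α * a₁)
    (f2 : 4 * ((α * a₁) * (α * a₂) + (α * a₂) * (α * a₃) - (α * a₁) * (α * a₃))
        + 2 * ℓ * (α * a₂) ^ 2 = α * a₂)
    (f3 : 4 * ((α * a₁) * (α * a₃) + (α * a₂) * (α * a₃) - (α * a₁) * (α * a₂))
        + 2 * ℓ * (α * a₃) ^ 2 = α * a₃) :
    α = 0 ∨ α = 1 := by
  have g1 : a₁ * (α * (α - 1)) = 0 := by linear_combination f1 - α ^ 2 * e1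
  have g2 : a₂ * (α * (α - 1)) = 0 := by linear_combination f2 - α ^ 2 * e2
  have g3 : a₃ * (α * (α - 1)) = 0 := by linear_combination f3 - α ^ 2 * e3
  have key : α * (α - 1) = 0 := by
    by_contra h
    exact hA0 ⟨by simpa [h] using mul_eq_zero.mp g1,
      by simpa [h] using mul_eq_zero.mp g2,
      by simpa [h] using mul_eq_zero.mp g3⟩
  rcases mul_eq_zero.mp key with h | h
  · exact Or.inl h
  · exact Or.inr (by linear_combination h)
end

section
/- For ℓ = 1, the diagonal solutions of the system 4(a₁a₂+a₁a₃−a₂a₃)+2a₁² = a₁ (and cyclic permutations) are exactly: (0,0,0), (1/6,1/6,1/6), the three permutations of (1/2,0,0), and the three permutations of (−1/3, 1/6, 1/6). -/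
theorem stmt_15 :
    {p : ℂ × ℂ × ℂ |
        4 * (p.1 * p.2.1 + p.1 * p.2.2 - p.2.1 * p.2.2) + 2 * p.1 ^ 2 = p.1 ∧
        4 * (p.1 * p.2.1 + p.2.1 * p.2.2 - p.1 * p.2.2) + 2 * p.2.1 ^ 2 = p.2.1 ∧
        4 * (p.1 * p.2.2 + p.2.1 * p.2.2 - p.1 * p.2.1) + 2 * p.2.2 ^ 2 = p.2.2} =
      ({((0 : ℂ), (0 : ℂ), (0 : ℂ)), (1 / 6, 1 / 6, 1 / 6),
        (1 / 2, 0, 0), (0, 1 / 2, 0), (0, 0, 1 / 2),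
        (-1 / 3, 1 / 6, 1 / 6), (1 / 6, -1 / 3, 1 / 6), (1 / 6, 1 / 6, -1 / 3)} :
          Set (ℂ × ℂ × ℂ)) := by
  ext ⟨a, b, c⟩
  simp only [Set.mem_setOf_eq, Set.mem_insert_iff, Set.mem_singleton_iff, Prod.mk.injEq]
  constructor
  · rintro ⟨e1, e2, e3⟩
    have h12 : (a - b) * (2 * a + 2 * b + 8 * c - 1) = 0 := by linear_combination e1 - e2
    have h23 : (b - c) * (8 * a + 2 * b + 2 * c - 1) = 0 := by linear_combination e2 - e3
    rcases mul_eq_zero.mp h12 with hab | h1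
    · have hab : a = b := sub_eq_zero.mp hab
      rcases mul_eq_zero.mp h23 with hbc | h2
      · have hbc : b = c := sub_eq_zero.mp hbc
        subst hab hbc
        have hq : a * (6 * a - 1) = 0 := by linear_combination e1
        rcases mul_eq_zero.mp hq with h | h
        · exact Or.inl ⟨h, h, h⟩
        · have : a = 1 / 6 := by linear_combination h / 6
          exact Or.inr (Or.inl ⟨this, this, this⟩)
      · -- a = b, 8a + 2b + 2c = 1
        subst hab
        have hq : a * (6 * a - 1) = 0 := by linear_combination e1
        rcases mul_eq_zero.mp hq with h | h
        · refine Or.inr (Or.inr (Or.inr (Or.inr (Or.inl ⟨h, h, ?_⟩))))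
          linear_combination h2 / 2 - 5 * h
        · have ha : a = 1 / 6 := by linear_combination h / 6
          refine Or.inr (Or.inr (Or.inr (Or.inr (Or.inr (Or.inr (Or.inr ⟨ha, ha, ?_⟩))))))
          linear_combination h2 / 2 - 5 * h / 6
    · rcases mul_eq_zero.mp h23 with hbc | h2
      · have hbc : b = c := sub_eq_zero.mp hbc
        subst hbc
        have hq : b * (6 * b - 1) = 0 := by linear_combination e2
        rcases mul_eq_zero.mp hq with h | h
        · refine Or.inr (Or.inr (Or.inl ⟨?_, h, h⟩))
          linear_combination h1 / 2 - 5 * h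
        · have hb : b = 1 / 6 := by linear_combination h / 6
          refine Or.inr (Or.inr (Or.inr (Or.inr (Or.inr (Or.inl ⟨?_, hb, hb⟩)))))
          linear_combination h1 / 2 - 5 * h / 6
      · -- 2a+2b+8c = 1 and 8a+2b+2c = 1 → a = c
        have hac : a = c := by linear_combination (h2 - h1) / 6
        subst hac
        have hq : a * (6 * a - 1) = 0 := by linear_combination e1
        rcases mul_eq_zero.mp hq with h | h
        · refine Or.inr (Or.inr (Or.inr (Or.inl ⟨h, ?_, h⟩)))
          linear_combination h1 / 2 - 5 * h
        · have ha : a = 1 / 6 := by linear_combination h / 6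
          refine Or.inr (Or.inr (Or.inr (Or.inr (Or.inr (Or.inr (Or.inl ⟨ha, ?_, ha⟩))))))
          linear_combination h1 / 2 - 5 * h / 6
  · rintro (⟨ha, hb, hc⟩ | ⟨ha, hb, hc⟩ | ⟨ha, hb, hc⟩ | ⟨ha, hb, hc⟩ | ⟨ha, hb, hc⟩ |
      ⟨ha, hb, hc⟩ | ⟨ha, hb, hc⟩ | ⟨ha, hb, hc⟩) <;>
    subst ha hb hc <;> refine ⟨by ring, by ring, by ring⟩
end
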